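/- Let ι be a finite index set and for each i ∈ ι let A i be an n×n Hermitian positive semidefinite complex matrix. Then det(1 + ∑_{i ∈ ι} A i) ≤ ∏_{i ∈ ι} det(1 + A i), where 1 denotes the n×n identity matrix. -/

import Mathlib

/-!
Write `B = Q⋆Q`. The matrix determinant lemma gives
`det (1 + A + B) = det (1 + A) * det (1 + Q (1 + A)⁻¹ Q⋆)`, and since `(1 + A)⁻¹ ≤ 1` in the
Loewner order, `1 + Q (1 + A)⁻¹ Q⋆ ≤ 1 + Q Q⋆`. The determinant is monotone on positive definite
matrices (again by the determinant lemma, as `det (1 + P) ≥ 1` for `P ≥ 0`), so the second factor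
is at most `det (1 + Q Q⋆) = det (1 + Q⋆Q)`. Induction on the family finishes the proof.
-/

open scoped ComplexOrder MatrixOrder

namespace Matrix

variable {𝕜 n : Type*} [RCLike 𝕜] [Fintype n] [DecidableEq n]

theorem IsHermitian.det_one_add_eq_prod_eigenvalues {P : Matrix n n 𝕜} (hP : P.IsHermitian) :
    (1 + P).det = ∏ i, (1 + (hP.eigenvalues i : 𝕜)) := by
  have hcfc : 1 + P = cfc (fun x : ℝ => 1 + x) P := by
    rw [cfc_const_add 1 (fun x => x) P, cfc_id' ℝ P, Algebra.algebraMap_eq_smul_one, one_smul]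
  rw [hcfc, hP.cfc_eq]
  simp [IsHermitian.cfc, -Unitary.conjStarAlgAut_apply]

theorem PosSemidef.one_le_det_one_add {P : Matrix n n 𝕜} (hP : P.PosSemidef) :
    1 ≤ (1 + P).det := by
  rw [hP.isHermitian.det_one_add_eq_prod_eigenvalues]
  exact Finset.one_le_prod fun i _ =>
    le_add_of_nonneg_right (RCLike.ofReal_nonneg.mpr (hP.eigenvalues_nonneg i))

theorem PosDef.det_le_det_of_le {X Y : Matrix n n 𝕜} (hX : X.PosDef) (hXY : X ≤ Y) :
    X.det ≤ Y.det := by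
  obtain ⟨Q, hQ⟩ := CStarAlgebra.nonneg_iff_eq_star_mul_self.mp (sub_nonneg.mpr hXY)
  have hY : Y = X + star Q * Q := by rw [← hQ, add_sub_cancel]
  have hone : 1 ≤ (1 + Q * X⁻¹ * star Q).det :=
    (hX.inv.posSemidef.mul_mul_conjTranspose_same Q).one_le_det_one_add
  rw [hY, det_add_mul _ _ hX.det_pos.ne'.isUnit]
  exact le_mul_of_one_le_right hX.det_pos.le hone

theorem PosSemidef.inv_one_add_le_one {A : Matrix n n 𝕜} (hA : A.PosSemidef) :
    (1 + A)⁻¹ ≤ 1 := by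
  set M := (1 + A)⁻¹ with hM
  have hunit : IsUnit (1 + A).det := (PosDef.one.add_posSemidef hA).det_pos.ne'.isUnit
  have hMH : Mᴴ = M := (PosDef.one.add_posSemidef hA).inv.isHermitian
  -- `1 - (1 + A)⁻¹ = (1 + A)⁻¹ A = (1 + A)⁻¹ (A (1 + A)) (1 + A)⁻¹`, and `A (1 + A) = A + Aᴴ A`.
  have hconj : 1 - M = Mᴴ * (A + Aᴴ * A) * M := by
    rw [hMH, hA.isHermitian.eq]
    calc 1 - M = M * A := by
          rw [← nonsing_inv_mul _ hunit, ← hM, Matrix.mul_add, Matrix.mul_one, add_sub_cancel_left]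
      _ = M * (A + A * A) * M := by
          rw [← mul_one_add, Matrix.mul_assoc, Matrix.mul_assoc, mul_nonsing_inv _ hunit,
            Matrix.mul_one]
  rw [le_iff, hconj]
  exact (hA.add (posSemidef_conjTranspose_mul_self A)).conjTranspose_mul_mul_same M

theorem PosSemidef.det_one_add_add_le {A B : Matrix n n 𝕜} (hA : A.PosSemidef)
    (hB : B.PosSemidef) : (1 + A + B).det ≤ (1 + A).det * (1 + B).det := by
  obtain ⟨Q, rfl⟩ := CStarAlgebra.nonneg_iff_eq_star_mul_self.mp hB.nonneg
  have hpos : (1 + A).PosDef := PosDef.one.add_posSemidef hA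
  have hle : 1 + Q * (1 + A)⁻¹ * star Q ≤ 1 + Q * star Q := by
    simpa using add_le_add_left (star_right_conjugate_le_conjugate hA.inv_one_add_le_one Q) 1
  calc (1 + A + star Q * Q).det = (1 + A).det * (1 + Q * (1 + A)⁻¹ * star Q).det :=
        det_add_mul _ _ hpos.det_pos.ne'.isUnit
    _ ≤ (1 + A).det * (1 + Q * star Q).det := by
        refine mul_le_mul_of_nonneg_left ?_ hpos.det_pos.le
        exact (PosDef.one.add_posSemidef
          (hpos.inv.posSemidef.mul_mul_conjTranspose_same Q)).det_le_det_of_le hle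
    _ = (1 + A).det * (1 + star Q * Q).det := by rw [det_one_add_mul_comm]

theorem det_one_add_sum_le_prod {ι : Type*} (s : Finset ι) {A : ι → Matrix n n 𝕜}
    (hA : ∀ i ∈ s, (A i).PosSemidef) : (1 + ∑ i ∈ s, A i).det ≤ ∏ i ∈ s, (1 + A i).det := by
  classical
  induction s using Finset.induction_on with
  | empty => simp
  | insert a s has ih =>
    rw [Finset.sum_insert has, Finset.prod_insert has, add_comm (A a), ← add_assoc, mul_comm]
    have hs : ∀ i ∈ s, (A i).PosSemidef := fun i hi => hA i (Finset.mem_insert_of_mem hi)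
    have ha : (A a).PosSemidef := hA a (Finset.mem_insert_self a s)
    calc (1 + ∑ i ∈ s, A i + A a).det ≤ (1 + ∑ i ∈ s, A i).det * (1 + A a).det :=
          (posSemidef_sum s hs).det_one_add_add_le ha
      _ ≤ (∏ i ∈ s, (1 + A i).det) * (1 + A a).det :=
          mul_le_mul_of_nonneg_right (ih hs)
            (PosDef.one.add_posSemidef ha).det_pos.le

end Matrix

open ComplexOrder in
/-- Finite-family generalization: for a finite family of Hermitian positive
semidefinite matrices `A i`, `det (1 + ∑ i, A i) ≤ ∏ i, det (1 + A i)`. -/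
theorem det_one_add_sum_le
    {n : ℕ} {ι : Type*} [Fintype ι]
    (A : ι → Matrix (Fin n) (Fin n) ℂ)
    (hA : ∀ i, (A i).PosSemidef) :
    (1 + ∑ i, A i).det ≤ ∏ i, (1 + A i).det :=
  Matrix.det_one_add_sum_le_prod Finset.univ fun i _ => hA i
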